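/- arXiv:2302.00311 — 2 statements merged into one kernel-verified Lean document; each statement's English description precedes it below -/
import Mathlib

section
/- Let d ≠ 0, ζ ∈ ℝ, μ ≠ 0, f₀ ∈ ℝ, and let u₀ be a non-constant, non-degenerate 2π-periodic C² solution of the stationary equation with parameter ε = 0. Let φ₀* be a nonzero 2π-periodic C² solution of L_{u₀}* ψ = 0. Then u₀' and φ₀* are linearly independent over ℝ, i.e. there are no real numbers (a,b) ≠ (0,0) with a·u₀'(x) + b·φ₀*(x) = 0 for all x. -/
noncomputable section

open Real MeasureTheory Set

/-- 2π-periodicity. -/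
def Per (f : ℝ → ℂ) : Prop := Function.Periodic f (2 * Real.pi)

/-- Squared L² norm on [-π, π]. -/
def L2sq (v : ℝ → ℂ) : ℝ := ∫ x in (-Real.pi)..Real.pi, ‖v x‖ ^ 2

/-- L² norm on [-π, π]. -/
def L2norm (v : ℝ → ℂ) : ℝ := Real.sqrt (L2sq v)

/-- H¹ norm. -/
def H1norm (v : ℝ → ℂ) : ℝ := Real.sqrt (L2sq v + L2sq (deriv v))

/-- H² norm. -/
def H2norm (v : ℝ → ℂ) : ℝ :=
  Real.sqrt (L2sq v + L2sq (deriv v) + L2sq (deriv (deriv v)))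

/-- A stationary solution of the (perturbed) Lugiato–Lefever equation with parameter ε:
a 2π-periodic C² function `u` with
`-d u'' + i ε V u' + (ζ - iμ) u - |u|² u + i f₀ = 0`. -/
def StatSol (d ζ μ f₀ ε : ℝ) (V : ℝ → ℝ) (u : ℝ → ℂ) : Prop :=
  ContDiff ℝ 2 u ∧ Per u ∧ ∀ x : ℝ,
    -(d : ℂ) * deriv (deriv u) x + Complex.I * (ε : ℂ) * (V x : ℂ) * deriv u x
      + ((ζ : ℂ) - Complex.I * (μ : ℂ)) * u x
      - ((‖u x‖ ^ 2 : ℝ) : ℂ) * u x + Complex.I * (f₀ : ℂ) = 0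

/-- The linearized operator `L_u φ = -d φ'' + (ζ - iμ - 2|u|²) φ - u² conj(φ)`. -/
def Lop (d ζ μ : ℝ) (u φ : ℝ → ℂ) : ℝ → ℂ := fun x =>
  -(d : ℂ) * deriv (deriv φ) x
    + ((ζ : ℂ) - Complex.I * (μ : ℂ) - 2 * ((‖u x‖ ^ 2 : ℝ) : ℂ)) * φ x
    - (u x) ^ 2 * (starRingEnd ℂ) (φ x)

/-- The adjoint linearized operator `L_u* ψ = -d ψ'' + (ζ + iμ - 2|u|²) ψ - u² conj(ψ)`. -/
def LopAdj (d ζ μ : ℝ) (u ψ : ℝ → ℂ) : ℝ → ℂ := fun x =>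
  -(d : ℂ) * deriv (deriv ψ) x
    + ((ζ : ℂ) + Complex.I * (μ : ℂ) - 2 * ((‖u x‖ ^ 2 : ℝ) : ℂ)) * ψ x
    - (u x) ^ 2 * (starRingEnd ℂ) (ψ x)

/-- Non-degeneracy: every 2π-periodic C² solution of `L_{u₀} φ = 0` is a real
multiple of `u₀'`. -/
def NonDeg (d ζ μ : ℝ) (u₀ : ℝ → ℂ) : Prop :=
  ∀ φ : ℝ → ℂ, ContDiff ℝ 2 φ → Per φ → (∀ x, Lop d ζ μ u₀ φ x = 0) →
    ∃ a : ℝ, ∀ x, φ x = (a : ℂ) * deriv u₀ x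

/-- The effective potential `V_eff(σ) = Re ∫ i V(x+σ) u₀'(x) conj(φ₀*(x)) dx`. -/
def Veff (V : ℝ → ℝ) (u₀ φ₀ : ℝ → ℂ) (σ : ℝ) : ℝ :=
  (∫ x in (-Real.pi)..Real.pi,
    Complex.I * (V (x + σ) : ℂ) * deriv u₀ x * (starRingEnd ℂ) (φ₀ x)).re

/-- The expression `Re ∫ i V'(x+σ) u₀'(x) conj(φ₀*(x)) dx` for `V_eff'(σ)`. -/
def VeffD (V : ℝ → ℝ) (u₀ φ₀ : ℝ → ℂ) (σ : ℝ) : ℝ :=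
  (∫ x in (-Real.pi)..Real.pi,
    Complex.I * ((deriv V (x + σ) : ℝ) : ℂ) * deriv u₀ x * (starRingEnd ℂ) (φ₀ x)).re

/-!
A stationary solution `u₀` has `L_{u₀} u₀' = 0` (differentiate the equation), and `L_{u₀}`
commutes with real scalars. If `φ₀*` were a real multiple of `u₀'`, it would then lie in the
kernels of both `L_{u₀}` and `L_{u₀}*`; but these operators differ by multiplication by `2iμ`,
so `φ₀* = 0`. Hence a real relation `a u₀' + b φ₀* = 0` forces `b = 0`, and then `a = 0`
because `u₀` is not constant.
-/

open Complex ComplexConjugate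

lemma LopAdj_eq_Lop_add (d ζ μ : ℝ) (u ψ : ℝ → ℂ) (x : ℝ) :
    LopAdj d ζ μ u ψ x = Lop d ζ μ u ψ x + 2 * I * μ * ψ x := by
  simp only [Lop, LopAdj]
  ring

lemma Lop_ofReal_mul (d ζ μ : ℝ) (u φ : ℝ → ℂ) (r x : ℝ) :
    Lop d ζ μ u (fun y => (r : ℂ) * φ y) x = r * Lop d ζ μ u φ x := by
  simp only [Lop, deriv_const_mul_field', map_mul, conj_ofReal]
  ring

lemma eq_zero_of_Lop_eq_zero_of_LopAdj_eq_zero {d ζ μ : ℝ} (hμ : μ ≠ 0) {u φ : ℝ → ℂ}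
    (hL : ∀ x, Lop d ζ μ u φ x = 0) (hL' : ∀ x, LopAdj d ζ μ u φ x = 0) (x : ℝ) :
    φ x = 0 := by
  have h : 2 * I * μ * φ x = 0 := by
    simpa [hL x] using (LopAdj_eq_Lop_add d ζ μ u φ x).symm.trans (hL' x)
  simpa [hμ, I_ne_zero] using h

lemma ofReal_norm_sq_eq_mul_conj (z : ℂ) : ((‖z‖ ^ 2 : ℝ) : ℂ) = z * conj z := by
  push_cast
  exact (mul_conj' z).symm

lemma StatSol.Lop_deriv_eq_zero {d ζ μ f₀ : ℝ} {V : ℝ → ℝ} {u : ℝ → ℂ}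
    (hu : StatSol d ζ μ f₀ 0 V u) (x : ℝ) : Lop d ζ μ u (deriv u) x = 0 := by
  obtain ⟨hC, -, heq⟩ := hu
  have hdiff : Differentiable ℝ u := hC.differentiable (by norm_num)
  set N : ℝ → ℂ := fun y => ((ζ : ℂ) - I * μ) * u y - u y * conj (u y) * u y + I * f₀
  have hdu'' : (fun y => (d : ℂ) * deriv (deriv u) y) = N := by
    funext y
    have h := heq y
    rw [ofReal_norm_sq_eq_mul_conj] at h
    simp only [ofReal_zero, mul_zero, zero_mul, add_zero] at h
    linear_combination -h
  have hu' : HasDerivAt u (deriv u x) x := (hdiff x).hasDerivAt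
  have hN : HasDerivAt N (((ζ : ℂ) - I * μ) * deriv u x
      - ((deriv u x * conj (u x) + u x * conj (deriv u x)) * u x
        + u x * conj (u x) * deriv u x)) x := by
    have hconj : HasDerivAt (fun y => conj (u y)) (conj (deriv u x)) x := by
      simpa only [RCLike.star_def] using hu'.star
    exact ((hu'.const_mul _).sub ((hu'.mul hconj).mul hu')).add_const _
  have hdu''' : (d : ℂ) * deriv (deriv (deriv u)) x = deriv N x := by
    rw [← hdu'', deriv_const_mul_field]
  simp only [Lop, ofReal_norm_sq_eq_mul_conj]
  linear_combination -hdu''' - hN.deriv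

theorem stmt_3_general
    (d ζ μ f₀ : ℝ) (hμ : μ ≠ 0)
    (u₀ : ℝ → ℂ) (hu₀ : StatSol d ζ μ f₀ 0 (fun _ => 0) u₀)
    (hu₀nc : ∃ x y : ℝ, u₀ x ≠ u₀ y)
    (φ₀ : ℝ → ℂ)
    (hφ₀ne : ∃ x, φ₀ x ≠ 0)
    (hφ₀ker : ∀ x, LopAdj d ζ μ u₀ φ₀ x = 0) :
    ∀ a b : ℝ, (∀ x : ℝ, (a : ℂ) * deriv u₀ x + (b : ℂ) * φ₀ x = 0) →
      a = 0 ∧ b = 0 := by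
  intro a b hab
  have hb : b = 0 := by
    by_contra hb
    have hbC : (b : ℂ) ≠ 0 := ofReal_ne_zero.mpr hb
    have hφ₀ : φ₀ = fun y => ((-a / b : ℝ) : ℂ) * deriv u₀ y := by
      funext y
      push_cast
      field_simp
      linear_combination hab y
    have hL : ∀ x, Lop d ζ μ u₀ φ₀ x = 0 := fun x => by
      rw [hφ₀, Lop_ofReal_mul, hu₀.Lop_deriv_eq_zero, mul_zero]
    obtain ⟨x, hx⟩ := hφ₀ne
    exact hx (eq_zero_of_Lop_eq_zero_of_LopAdj_eq_zero hμ hL hφ₀ker x)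
  refine ⟨?_, hb⟩
  by_contra ha
  obtain ⟨x, y, hxy⟩ := hu₀nc
  refine hxy (is_const_of_deriv_eq_zero (hu₀.1.differentiable (by norm_num)) (fun z => ?_) x y)
  simpa [hb, ha] using hab z

/-- **Lemma (parity, part (i) of Lemma in the paper): `u₀'` and `φ₀*` are linearly
independent over ℝ.** -/
theorem stmt_3
    (d ζ μ f₀ : ℝ) (hd : d ≠ 0) (hμ : μ ≠ 0)
    (u₀ : ℝ → ℂ) (hu₀ : StatSol d ζ μ f₀ 0 (fun _ => 0) u₀)
    (hu₀nc : ∃ x y : ℝ, u₀ x ≠ u₀ y)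
    (hnd : NonDeg d ζ μ u₀)
    (φ₀ : ℝ → ℂ) (hφ₀C : ContDiff ℝ 2 φ₀) (hφ₀per : Per φ₀)
    (hφ₀ne : ∃ x, φ₀ x ≠ 0)
    (hφ₀ker : ∀ x, LopAdj d ζ μ u₀ φ₀ x = 0) :
    ∀ a b : ℝ, (∀ x : ℝ, (a : ℂ) * deriv u₀ x + (b : ℂ) * φ₀ x = 0) →
      a = 0 ∧ b = 0 :=
  stmt_3_general d ζ μ f₀ hμ u₀ hu₀ hu₀nc φ₀ hφ₀ne hφ₀ker
end
end

section
/- Let d ≠ 0, ζ, f₀ ∈ ℝ, μ ≠ 0, ε ∈ ℝ, and let V : ℝ → ℝ be 2π-periodic and continuous. If u : ℝ → ℂ is a twice continuously differentiable 2π-periodic function satisfying −d u''(x) + i ε V(x) u'(x) + (ζ − iμ) u(x) − |u(x)|² u(x) + i f₀ = 0 for all x ∈ ℝ, then ∫_{−π}^{π} ( u'(x) conj(u(x)) − conj(u'(x)) u(x) ) dx = 0, equivalently Im ∫_{−π}^{π} u'(x) conj(u(x)) dx = 0. -/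
noncomputable section

open Real MeasureTheory Set

/-!
Multiplying the equation by `conj u'` and taking real parts, every term except the damping one
is an exact derivative: the transport term `i ε V |u'|²` is purely imaginary, and the rest
assemble into the derivative of the energy density
`E = -d/2 |u'|² + ζ/2 |u|² - |u|⁴/4 + f₀ Im u`. What remains is `E' = μ Im (u' conj u)`.
Integrating over a period kills `E'`, and `μ ≠ 0` gives the claim.
-/

open ComplexConjugate

theorem Function.Periodic.deriv {𝕜 F : Type*} [NontriviallyNormedField 𝕜] [NormedAddCommGroup F]
    [NormedSpace 𝕜 F] {f : 𝕜 → F} {T : 𝕜} (h : Function.Periodic f T) :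
    Function.Periodic (deriv f) T := fun x => by
  rw [← deriv_comp_add_const, h.funext]

theorem Function.Periodic.intervalIntegral_eq_zero_of_hasDerivAt {E : Type*}
    [NormedAddCommGroup E] [NormedSpace ℝ E] [CompleteSpace E] {F f : ℝ → E} {T : ℝ}
    (hF : Function.Periodic F T) (hderiv : ∀ x, HasDerivAt F (f x) x) (a : ℝ)
    (hint : IntervalIntegrable f volume a (a + T)) :
    ∫ x in a..a + T, f x = 0 := by
  rw [intervalIntegral.integral_eq_sub_of_hasDerivAt (fun x _ => hderiv x) hint, hF a, sub_self]

theorem intervalIntegral_sub_conj {f : ℝ → ℂ} {a b : ℝ} {μ : Measure ℝ}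
    (hf : IntervalIntegrable f μ a b) :
    ∫ x in a..b, (f x - conj (f x)) ∂μ = ((2 * (∫ x in a..b, f x ∂μ).im : ℝ) : ℂ) * Complex.I := by
  simp_rw [Complex.sub_conj, intervalIntegral.integral_mul_const, intervalIntegral.integral_ofReal,
    intervalIntegral.integral_const_mul, ← RCLike.im_to_complex,
    intervalIntegral.intervalIntegral_im hf]

-- `u conj u = |u|²` and `i (conj u - u) / 2 = Im u`; the complex form makes the product rule apply.
def lleEnergy (d ζ f₀ : ℝ) (u : ℝ → ℂ) (x : ℝ) : ℂ :=
  -(d / 2 : ℂ) * (deriv u x * conj (deriv u x)) + (ζ / 2 : ℂ) * (u x * conj (u x))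
    - (u x * conj (u x)) ^ 2 / 4 + Complex.I * f₀ / 2 * (conj (u x) - u x)

theorem lleEnergy_periodic {d ζ f₀ T : ℝ} {u : ℝ → ℂ} (hu : Function.Periodic u T) :
    Function.Periodic (lleEnergy d ζ f₀ u) T := fun x => by
  simp only [lleEnergy, hu x, hu.deriv x]

theorem lle_energy_balance {d ζ μ f₀ ε v : ℝ} {a b c : ℂ}
    (h : -(d : ℂ) * c + Complex.I * ε * v * b + (ζ - Complex.I * μ) * a
      - ((‖a‖ ^ 2 : ℝ) : ℂ) * a + Complex.I * f₀ = 0) :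
    -(d / 2 : ℂ) * (c * conj b + b * conj c) + (ζ / 2 : ℂ) * (b * conj a + a * conj b)
      - (a * conj a) * (b * conj a + a * conj b) / 2 + Complex.I * f₀ / 2 * (conj b - b)
      = ((μ * (b * conj a).im : ℝ) : ℂ) := by
  have hc := congrArg conj h
  simp only [map_add, map_sub, map_mul, map_neg, map_zero, Complex.conj_ofReal,
    Complex.conj_I] at hc
  have hnorm : ((‖a‖ ^ 2 : ℝ) : ℂ) = a * conj a := by
    rw [Complex.mul_conj, Complex.normSq_eq_norm_sq, Complex.ofReal_pow]
  have him := Complex.sub_conj (b * conj a)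
  simp only [map_mul, Complex.conj_conj] at him
  rw [hnorm] at h hc
  push_cast at him ⊢
  linear_combination (conj b / 2) * h + (b / 2) * hc - (Complex.I * μ / 2) * him
    - (μ * ((b * conj a).im : ℂ)) * Complex.I_sq

theorem hasDerivAt_lleEnergy {d ζ μ f₀ ε : ℝ} {V : ℝ → ℝ} {u : ℝ → ℂ} {x : ℝ}
    (hu : DifferentiableAt ℝ u x) (hu' : DifferentiableAt ℝ (deriv u) x)
    (heq : -(d : ℂ) * deriv (deriv u) x + Complex.I * (ε : ℂ) * (V x : ℂ) * deriv u x
      + ((ζ : ℂ) - Complex.I * (μ : ℂ)) * u x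
      - ((‖u x‖ ^ 2 : ℝ) : ℂ) * u x + Complex.I * (f₀ : ℂ) = 0) :
    HasDerivAt (lleEnergy d ζ f₀ u) ((μ * (deriv u x * conj (u x)).im : ℝ) : ℂ) x := by
  have ha := hu.hasDerivAt
  have hb := hu'.hasDerivAt
  have ha' : HasDerivAt (fun y => conj (u y)) (conj (deriv u x)) x := ha.star
  have hb' : HasDerivAt (fun y => conj (deriv u y)) (conj (deriv (deriv u) x)) x := hb.star
  have H := ((((hb.mul hb').const_mul (-(d / 2 : ℂ))).add
    ((ha.mul ha').const_mul (ζ / 2 : ℂ))).sub ((ha.mul ha').pow 2 |>.div_const 4)).add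
    ((ha'.sub ha).const_mul (Complex.I * f₀ / 2))
  refine H.congr_deriv ?_
  rw [← lle_energy_balance heq]
  simp only [Pi.mul_apply]
  ring

theorem stmt_7_general
    (d ζ μ f₀ ε : ℝ) (hμ : μ ≠ 0)
    (V : ℝ → ℝ)
    (u : ℝ → ℂ) (hu : StatSol d ζ μ f₀ ε V u) :
    (∫ x in (-Real.pi)..Real.pi,
        (deriv u x * (starRingEnd ℂ) (u x) - (starRingEnd ℂ) (deriv u x) * u x)) = 0 ∧
    (∫ x in (-Real.pi)..Real.pi, deriv u x * (starRingEnd ℂ) (u x)).im = 0 := by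
  obtain ⟨hC2, hper, heq⟩ := hu
  have hdiff : Differentiable ℝ u := hC2.differentiable (by norm_num)
  have hdiff' : Differentiable ℝ (deriv u) := by
    simpa using hC2.differentiable_iteratedDeriv 1 (by norm_num)
  have hw : Continuous fun x => deriv u x * conj (u x) :=
    hdiff'.continuous.mul hdiff.continuous.star
  have hdissip : ∫ x in -π..π, μ * (deriv u x * conj (u x)).im = 0 := by
    have h := (lleEnergy_periodic hper).intervalIntegral_eq_zero_of_hasDerivAt
      (fun x => hasDerivAt_lleEnergy (hdiff x) (hdiff' x) (heq x)) (-π)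
      ((Complex.continuous_ofReal.comp (continuous_const.mul
        (Complex.continuous_im.comp hw))).intervalIntegrable _ _)
    rw [show -π + 2 * π = π by ring, intervalIntegral.integral_ofReal] at h
    exact_mod_cast h
  have him : (∫ x in -π..π, deriv u x * conj (u x)).im = 0 := by
    rw [intervalIntegral.integral_const_mul, mul_eq_zero] at hdissip
    exact (intervalIntegral.intervalIntegral_im (hw.intervalIntegrable _ _)).symm.trans
      (hdissip.resolve_left hμ)
  refine ⟨?_, him⟩
  have hconj : ∀ x, conj (deriv u x) * u x = conj (deriv u x * conj (u x)) := by simp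
  simp only [hconj]
  rw [intervalIntegral_sub_conj (hw.intervalIntegrable _ _), him]
  simp

/-- **Remark (integral constraint for stationary solutions).** -/
theorem stmt_7
    (d ζ μ f₀ ε : ℝ) (hd : d ≠ 0) (hμ : μ ≠ 0)
    (V : ℝ → ℝ) (hVper : Function.Periodic V (2 * Real.pi)) (hV : Continuous V)
    (u : ℝ → ℂ) (hu : StatSol d ζ μ f₀ ε V u) :
    (∫ x in (-Real.pi)..Real.pi,
        (deriv u x * (starRingEnd ℂ) (u x) - (starRingEnd ℂ) (deriv u x) * u x)) = 0 ∧
    (∫ x in (-Real.pi)..Real.pi, deriv u x * (starRingEnd ℂ) (u x)).im = 0 :=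
  stmt_7_general d ζ μ f₀ ε hμ V u hu
end
end
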